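/- Let d ≥ 1. Let ρ : [0,1] × ℝ^d × ℝ^d → ℝ, written (t, θ, θ₁) ↦ ρ_t(θ | θ₁), be a family of conditional probability paths, let u : [0,1] × ℝ^d × ℝ^d → ℝ^d be a family of conditional vector fields, and let π : ℝ^d → ℝ be a nonnegative measurable density. Define the marginal probability path ρ̄_t(θ) = ∫_{ℝ^d} ρ_t(θ | θ₁) π(θ₁) dθ₁ and, at points where ρ̄_t(θ) > 0, the marginal vector field ū_t(θ) = ρ̄_t(θ)⁻¹ ∫_{ℝ^d} u_t(θ | θ₁) ρ_t(θ | θ₁) π(θ₁) dθ₁; assume ρ̄_t(θ) > 0 for Lebesgue-almost every (t, θ). For a measurable v : [0,1] × ℝ^d → ℝ^d define the flow matching loss L_FM(v) = ∫₀¹ ∫ ‖v(t,θ) − ū_t(θ)‖² ρ̄_t(θ) dθ dt and the conditional flow matching loss L_CFM(v) = ∫₀¹ ∫∫ ‖v(t,θ) − u_t(θ | θ₁)‖² ρ_t(θ | θ₁) π(θ₁) dθ₁ dθ dt. Then for any two measurable v, w for which all four integrals (of ‖v‖², ‖w‖², ‖ū‖² against ρ̄, and ‖u_t(·|θ₁)‖²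 against ρ π) are finite, L_FM(v) − L_CFM(v) = L_FM(w) − L_CFM(w); i.e., the two losses differ by a quantity independent of the regressed vector field, so they have the same minimizers over any class of fields. -/

import Mathlib

/-! For fixed `(t, θ)` with `ρ̄_t(θ) > 0`, expanding the squares gives, for every vector `a`,
`‖a - ū‖² ρ̄ - ∫ ‖a - u(·|θ₁)‖² ρ π dθ₁ = ‖ū‖² ρ̄ - ∫ ‖u(·|θ₁)‖² ρ π dθ₁`:
the terms `‖a‖² ρ̄` cancel, and so do the cross terms `2⟪a, ρ̄ ū⟫ = 2⟪a, ∫ ρ π u dθ₁⟫` by the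
definition of `ū` (a bias–variance decomposition). Taking `a = v(t, θ)` and integrating over
`(t, θ)` writes `L_FM(v) - L_CFM(v)` as an integral in which `v` does not occur. The finiteness
assumptions make every integrand integrable, so that Fubini applies: use
`‖a - b‖² ≤ 2‖a‖² + 2‖b‖²`, and Tonelli for `∫ ‖v‖² ρ π dθ₁ = ‖v‖² ρ̄`. -/

open MeasureTheory

abbrev Param (d : ℕ) := EuclideanSpace ℝ (Fin d)

open Filter Function

lemma norm_sub_sq_le_two_mul {E : Type*} [SeminormedAddCommGroup E] (a b : E) :
    ‖a - b‖ ^ 2 ≤ 2 * (‖a‖ ^ 2 + ‖b‖ ^ 2) :=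
  (pow_le_pow_left₀ (norm_nonneg _) (norm_sub_le a b) 2).trans add_sq_le

namespace MeasureTheory

variable {α β E : Type*} [MeasurableSpace α] [MeasurableSpace β] [NormedAddCommGroup E]

lemma Integrable.norm_sub_sq_mul {μ : Measure α} {y z : α → E} {r : α → ℝ}
    (hy : AEStronglyMeasurable y μ) (hz : AEStronglyMeasurable z μ)
    (hr : AEStronglyMeasurable r μ) (hr0 : ∀ p, 0 ≤ r p)
    (hyr : Integrable (fun p => ‖y p‖ ^ 2 * r p) μ)
    (hzr : Integrable (fun p => ‖z p‖ ^ 2 * r p) μ) :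
    Integrable (fun p => ‖y p - z p‖ ^ 2 * r p) μ := by
  refine ((hyr.add hzr).const_mul 2).mono' (((hy.sub hz).norm.pow 2).mul hr)
    (Eventually.of_forall fun p => ?_)
  rw [Real.norm_of_nonneg (mul_nonneg (sq_nonneg _) (hr0 p))]
  calc ‖y p - z p‖ ^ 2 * r p ≤ 2 * (‖y p‖ ^ 2 + ‖z p‖ ^ 2) * r p :=
        mul_le_mul_of_nonneg_right (norm_sub_sq_le_two_mul _ _) (hr0 p)
    _ = 2 * (‖y p‖ ^ 2 * r p + ‖z p‖ ^ 2 * r p) := by ring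

lemma integrable_prod_mul_of_integrable_mul_integral {μ : Measure α} {ν : Measure β} [SFinite ν]
    {f : α → ℝ} {k : α → β → ℝ} (hf : AEStronglyMeasurable f μ)
    (hk : AEStronglyMeasurable (uncurry k) (μ.prod ν)) (hf0 : ∀ p, 0 ≤ f p)
    (hk0 : ∀ p x, 0 ≤ k p x) (hk_int : ∀ᵐ p ∂μ, Integrable (k p) ν)
    (hfk : Integrable (fun p => f p * ∫ x, k p x ∂ν) μ) :
    Integrable (fun q : α × β => f q.1 * k q.1 q.2) (μ.prod ν) := by
  refine (integrable_prod_iff (hf.comp_fst.mul hk)).2 ⟨?_, hfk.congr ?_⟩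
  · filter_upwards [hk_int] with p hp
    exact hp.const_mul (f p)
  · refine Eventually.of_forall fun p => ?_
    show f p * ∫ x, k p x ∂ν = ∫ x, ‖f p * k p x‖ ∂ν
    rw [← integral_const_mul]
    exact integral_congr_ae (Eventually.of_forall fun x =>
      (Real.norm_of_nonneg (mul_nonneg (hf0 _) (hk0 _ _))).symm)

lemma integrable_integral_norm_sub_sq_mul {μ : Measure α} {ν : Measure β} [SFinite ν]
    {k : α → β → ℝ} {g : α → β → E} {ρbar : α → ℝ} {y : α → E}
    (hy : AEStronglyMeasurable y μ) (hk : AEStronglyMeasurable (uncurry k) (μ.prod ν))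
    (hg : AEStronglyMeasurable (uncurry g) (μ.prod ν)) (hk0 : ∀ p x, 0 ≤ k p x)
    (hρbar : ∀ p, ρbar p = ∫ x, k p x ∂ν) (hpos : ∀ᵐ p ∂μ, 0 < ρbar p)
    (hyρ : Integrable (fun p => ‖y p‖ ^ 2 * ρbar p) μ)
    (hgk : Integrable (fun q : α × β => ‖g q.1 q.2‖ ^ 2 * k q.1 q.2) (μ.prod ν)) :
    Integrable (fun p => ∫ x, ‖y p - g p x‖ ^ 2 * k p x ∂ν) μ := by
  have hk_int : ∀ᵐ p ∂μ, Integrable (k p) ν :=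
    hpos.mono fun p hp => .of_integral_ne_zero (hρbar p ▸ hp.ne')
  have hyk : Integrable (fun q : α × β => ‖y q.1‖ ^ 2 * k q.1 q.2) (μ.prod ν) :=
    integrable_prod_mul_of_integrable_mul_integral (f := fun p => ‖y p‖ ^ 2) (hy.norm.pow 2) hk
      (fun _ => sq_nonneg _) hk0 hk_int (by simpa only [hρbar] using hyρ)
  exact (Integrable.norm_sub_sq_mul hy.comp_fst hg hk (fun q => hk0 q.1 q.2) hyk
    hgk).integral_prod_left

variable [InnerProductSpace ℝ E]

section Weighted

variable {ν : Measure β} {w : β → ℝ} {g : β → E}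

lemma Integrable.smul_of_integrable_sq_norm_mul (hw0 : ∀ x, 0 ≤ w x) (hw : Integrable w ν)
    (hg : AEStronglyMeasurable g ν) (hgw : Integrable (fun x => ‖g x‖ ^ 2 * w x) ν) :
    Integrable (fun x => w x • g x) ν := by
  refine ((hw.add hgw).div_const 2).mono' (hw.aestronglyMeasurable.smul hg)
    (Eventually.of_forall fun x => ?_)
  rw [norm_smul, Real.norm_of_nonneg (hw0 x), Pi.add_apply]
  -- `‖g x‖ ≤ (1 + ‖g x‖²) / 2`
  nlinarith [mul_nonneg (hw0 x) (sq_nonneg (‖g x‖ - 1))]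

variable [CompleteSpace E]

lemma integral_norm_sub_sq_mul (hw0 : ∀ x, 0 ≤ w x) (hw : Integrable w ν)
    (hg : AEStronglyMeasurable g ν) (hgw : Integrable (fun x => ‖g x‖ ^ 2 * w x) ν) (a : E) :
    ∫ x, ‖a - g x‖ ^ 2 * w x ∂ν
      = ‖a‖ ^ 2 * ∫ x, w x ∂ν - 2 * inner ℝ a (∫ x, w x • g x ∂ν)
        + ∫ x, ‖g x‖ ^ 2 * w x ∂ν := by
  have hwg := hw.smul_of_integrable_sq_norm_mul hw0 hg hgw
  have expand : ∀ x, ‖a - g x‖ ^ 2 * w x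
      = ‖a‖ ^ 2 * w x - 2 * inner ℝ a (w x • g x) + ‖g x‖ ^ 2 * w x := by
    intro x
    rw [norm_sub_sq_real, real_inner_smul_right]
    ring
  simp_rw [expand]
  have hw' : Integrable (fun x => ‖a‖ ^ 2 * w x) ν := hw.const_mul _
  have hwg' : Integrable (fun x => 2 * inner ℝ a (w x • g x)) ν :=
    (hwg.const_inner a).const_mul 2
  have hsub : Integrable (fun x => ‖a‖ ^ 2 * w x - 2 * inner ℝ a (w x • g x)) ν :=
    hw'.sub hwg'
  rw [integral_add hsub hgw, integral_sub hw' hwg', integral_const_mul,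
    integral_const_mul, integral_inner hwg]

lemma norm_sub_sq_mul_integral_sub_integral_eq (hw0 : ∀ x, 0 ≤ w x) (hw : Integrable w ν)
    (hg : AEStronglyMeasurable g ν) (hgw : Integrable (fun x => ‖g x‖ ^ 2 * w x) ν) {b : E}
    (hb : (∫ x, w x ∂ν) • b = ∫ x, w x • g x ∂ν) (a : E) :
    ‖a - b‖ ^ 2 * ∫ x, w x ∂ν - ∫ x, ‖a - g x‖ ^ 2 * w x ∂ν
      = ‖b‖ ^ 2 * ∫ x, w x ∂ν - ∫ x, ‖g x‖ ^ 2 * w x ∂ν := by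
  rw [integral_norm_sub_sq_mul hw0 hw hg hgw, ← hb, real_inner_smul_right, norm_sub_sq_real]
  ring

end Weighted

lemma ae_norm_sub_sq_mul_sub_integral_eq [CompleteSpace E] {μ : Measure α} [SFinite μ]
    {ν : Measure β} [SFinite ν] {k : α → β → ℝ} {g : α → β → E} {ρbar : α → ℝ} {ubar : α → E}
    (hg : AEStronglyMeasurable (uncurry g) (μ.prod ν))
    (hk0 : ∀ p x, 0 ≤ k p x) (hρbar : ∀ p, ρbar p = ∫ x, k p x ∂ν)
    (hpos : ∀ᵐ p ∂μ, 0 < ρbar p)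
    (hubar : ∀ p, 0 < ρbar p → ubar p = (ρbar p)⁻¹ • ∫ x, k p x • g p x ∂ν)
    (hgk : Integrable (fun q : α × β => ‖g q.1 q.2‖ ^ 2 * k q.1 q.2) (μ.prod ν)) (y : α → E) :
    ∀ᵐ p ∂μ, ‖y p - ubar p‖ ^ 2 * ρbar p - ∫ x, ‖y p - g p x‖ ^ 2 * k p x ∂ν
      = ‖ubar p‖ ^ 2 * ρbar p - ∫ x, ‖g p x‖ ^ 2 * k p x ∂ν := by
  filter_upwards [hpos, hg.prodMk_left, hgk.prod_right_ae] with p hp hgp hgkp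
  have hkp : Integrable (k p) ν := .of_integral_ne_zero (hρbar p ▸ hp.ne')
  have hb : ρbar p • ubar p = ∫ x, k p x • g p x ∂ν := by
    rw [hubar p hp, smul_inv_smul₀ hp.ne']
  rw [hρbar p] at hb ⊢
  exact norm_sub_sq_mul_integral_sub_integral_eq (hk0 p) hkp hgp hgkp hb (y p)

end MeasureTheory

section FlowMatching

variable {T X Y E : Type*} [MeasurableSpace T] [MeasurableSpace X] [MeasurableSpace Y]
  [NormedAddCommGroup E] [InnerProductSpace ℝ E] [CompleteSpace E]

noncomputable def fmLoss (μ : Measure T) (ν : Measure X) (ρbar : T → X → ℝ) (ubar v : T → X → E) :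
    ℝ :=
  ∫ t, ∫ θ, ‖v t θ - ubar t θ‖ ^ 2 * ρbar t θ ∂ν ∂μ

noncomputable def cfmLoss (μ : Measure T) (ν : Measure X) (ν' : Measure Y) (k : T → X → Y → ℝ)
    (u : T → X → Y → E) (v : T → X → E) : ℝ :=
  ∫ t, ∫ θ, ∫ θ₁, ‖v t θ - u t θ θ₁‖ ^ 2 * k t θ θ₁ ∂ν' ∂ν ∂μ

variable {μ : Measure T} [SFinite μ] {ν : Measure X} [SFinite ν] {ν' : Measure Y} [SFinite ν']
  {k : T → X → Y → ℝ} {u : T → X → Y → E} {ρbar : T → X → ℝ} {ubar : T → X → E}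

theorem fmLoss_sub_cfmLoss_eq
    (hk : AEStronglyMeasurable (fun q : T × X × Y => k q.1 q.2.1 q.2.2) (μ.prod (ν.prod ν')))
    (hu : AEStronglyMeasurable (fun q : T × X × Y => u q.1 q.2.1 q.2.2) (μ.prod (ν.prod ν')))
    (hk0 : ∀ t θ θ₁, 0 ≤ k t θ θ₁) (hρbar : ∀ t θ, ρbar t θ = ∫ θ₁, k t θ θ₁ ∂ν')
    (hpos : ∀ᵐ p ∂μ.prod ν, 0 < ρbar p.1 p.2)
    (hubar : ∀ t θ, 0 < ρbar t θ → ubar t θ = (ρbar t θ)⁻¹ • ∫ θ₁, k t θ θ₁ • u t θ θ₁ ∂ν')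
    (hubar_int : Integrable (fun p : T × X => ‖ubar p.1 p.2‖ ^ 2 * ρbar p.1 p.2) (μ.prod ν))
    (huk : Integrable (fun q : T × X × Y => ‖u q.1 q.2.1 q.2.2‖ ^ 2 * k q.1 q.2.1 q.2.2)
      (μ.prod (ν.prod ν')))
    {v : T → X → E} (hv : AEStronglyMeasurable (fun p : T × X => v p.1 p.2) (μ.prod ν))
    (hv_int : Integrable (fun p : T × X => ‖v p.1 p.2‖ ^ 2 * ρbar p.1 p.2) (μ.prod ν)) :
    fmLoss μ ν ρbar ubar v - cfmLoss μ ν ν' k u v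
      = ∫ p, (‖ubar p.1 p.2‖ ^ 2 * ρbar p.1 p.2
          - ∫ θ₁, ‖u p.1 p.2 θ₁‖ ^ 2 * k p.1 p.2 θ₁ ∂ν') ∂μ.prod ν := by
  have assoc := measurePreserving_prodAssoc μ ν ν'
  have hk' : AEStronglyMeasurable (uncurry fun (p : T × X) θ₁ => k p.1 p.2 θ₁)
      ((μ.prod ν).prod ν') := hk.comp_measurePreserving assoc
  have hu' : AEStronglyMeasurable (uncurry fun (p : T × X) θ₁ => u p.1 p.2 θ₁)
      ((μ.prod ν).prod ν') := hu.comp_measurePreserving assoc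
  have huk' : Integrable (fun q : (T × X) × Y => ‖u q.1.1 q.1.2 q.2‖ ^ 2 * k q.1.1 q.1.2 q.2)
      ((μ.prod ν).prod ν') :=
    (assoc.integrable_comp_emb MeasurableEquiv.prodAssoc.measurableEmbedding).2 huk
  have hρbar_meas : AEStronglyMeasurable (fun p : T × X => ρbar p.1 p.2) (μ.prod ν) :=
    hk'.integral_prod_right'.congr (.of_forall fun p => (hρbar p.1 p.2).symm)
  have hubar_meas : AEStronglyMeasurable (fun p : T × X => ubar p.1 p.2) (μ.prod ν) := by
    refine (hρbar_meas.aemeasurable.inv.aestronglyMeasurable.smul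
      (hk'.smul hu').integral_prod_right').congr ?_
    filter_upwards [hpos] with p hp using (hubar p.1 p.2 hp).symm
  have hρbar0 : ∀ t θ, 0 ≤ ρbar t θ := fun t θ =>
    hρbar t θ ▸ integral_nonneg (hk0 t θ)
  have hF := Integrable.norm_sub_sq_mul hv hubar_meas hρbar_meas (fun p => hρbar0 p.1 p.2)
    hv_int hubar_int
  have hG := integrable_integral_norm_sub_sq_mul hv hk' hu' (fun p => hk0 p.1 p.2)
    (fun p => hρbar p.1 p.2) hpos hv_int huk'
  rw [fmLoss, cfmLoss, ← integral_prod _ hF, ← integral_prod _ hG, ← integral_sub hF hG]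
  exact integral_congr_ae (ae_norm_sub_sq_mul_sub_integral_eq hu' (fun p => hk0 p.1 p.2)
    (fun p => hρbar p.1 p.2) hpos (fun p => hubar p.1 p.2) huk' _)

end FlowMatching

theorem fm_cfm_losses_differ_by_constant_general
    (d : ℕ)
    (ρ : ℝ → Param d → Param d → ℝ)
    (u : ℝ → Param d → Param d → Param d)
    (π : Param d → ℝ)
    (hρ_meas : Measurable fun p : ℝ × Param d × Param d => ρ p.1 p.2.1 p.2.2)
    (hρ_nonneg : ∀ t θ θ₁, 0 ≤ ρ t θ θ₁)
    (hu_meas : Measurable fun p : ℝ × Param d × Param d => u p.1 p.2.1 p.2.2)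
    (hπ_meas : Measurable π) (hπ_nonneg : ∀ θ₁, 0 ≤ π θ₁)
    -- the marginal probability path
    (ρbar : ℝ → Param d → ℝ)
    (hρbar : ∀ t θ, ρbar t θ = ∫ θ₁, ρ t θ θ₁ * π θ₁)
    -- the marginal vector field, defined where `ρbar t θ > 0`
    (ubar : ℝ → Param d → Param d)
    (hubar : ∀ t θ, 0 < ρbar t θ →
      ubar t θ = (ρbar t θ)⁻¹ • ∫ θ₁, (ρ t θ θ₁ * π θ₁) • u t θ θ₁)
    -- `ρbar` is positive almost everywhere on `(0,1] × ℝ^d`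
    (hρbar_pos : ∀ᵐ p : ℝ × Param d
        ∂(volume.restrict (Set.Ioc (0 : ℝ) 1 ×ˢ (Set.univ : Set (Param d)))),
      0 < ρbar p.1 p.2)
    -- the flow matching loss
    (LFM : (ℝ → Param d → Param d) → ℝ)
    (hLFM : ∀ v, LFM v = ∫ t in (0 : ℝ)..1, ∫ θ, ‖v t θ - ubar t θ‖ ^ 2 * ρbar t θ)
    -- the conditional flow matching loss
    (LCFM : (ℝ → Param d → Param d) → ℝ)
    (hLCFM : ∀ v, LCFM v
      = ∫ t in (0 : ℝ)..1, ∫ θ, ∫ θ₁, ‖v t θ - u t θ θ₁‖ ^ 2 * (ρ t θ θ₁ * π θ₁))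
    -- the two regressed vector fields, measurable
    (v w : ℝ → Param d → Param d)
    (hv_meas : Measurable fun p : ℝ × Param d => v p.1 p.2)
    (hw_meas : Measurable fun p : ℝ × Param d => w p.1 p.2)
    -- finiteness of the four relevant integrals
    (hIv : Integrable (fun p : ℝ × Param d => ‖v p.1 p.2‖ ^ 2 * ρbar p.1 p.2)
      (volume.restrict (Set.Ioc (0 : ℝ) 1 ×ˢ (Set.univ : Set (Param d)))))
    (hIw : Integrable (fun p : ℝ × Param d => ‖w p.1 p.2‖ ^ 2 * ρbar p.1 p.2)
      (volume.restrict (Set.Ioc (0 : ℝ) 1 ×ˢ (Set.univ : Set (Param d)))))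
    (hIubar : Integrable (fun p : ℝ × Param d => ‖ubar p.1 p.2‖ ^ 2 * ρbar p.1 p.2)
      (volume.restrict (Set.Ioc (0 : ℝ) 1 ×ˢ (Set.univ : Set (Param d)))))
    (hIu : Integrable
      (fun p : ℝ × Param d × Param d =>
        ‖u p.1 p.2.1 p.2.2‖ ^ 2 * (ρ p.1 p.2.1 p.2.2 * π p.2.2))
      (volume.restrict (Set.Ioc (0 : ℝ) 1 ×ˢ (Set.univ : Set (Param d × Param d))))) :
    LFM v - LCFM v = LFM w - LCFM w := by
  rw [Measure.volume_eq_prod, ← Measure.restrict_prod_eq_prod_univ] at hρbar_pos hIv hIw hIubar hIu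
  set μ : Measure ℝ := volume.restrict (Set.Ioc 0 1)
  have hk0 : ∀ t θ θ₁, 0 ≤ ρ t θ θ₁ * π θ₁ := fun t θ θ₁ =>
    mul_nonneg (hρ_nonneg t θ θ₁) (hπ_nonneg θ₁)
  have hk : Measurable fun p : ℝ × Param d × Param d => ρ p.1 p.2.1 p.2.2 * π p.2.2 :=
    hρ_meas.mul (hπ_meas.comp measurable_snd.snd)
  have key : ∀ y : ℝ → Param d → Param d, (Measurable fun p : ℝ × Param d => y p.1 p.2) →
      Integrable (fun p : ℝ × Param d => ‖y p.1 p.2‖ ^ 2 * ρbar p.1 p.2)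
        (μ.prod volume) →
      LFM y - LCFM y = ∫ p, (‖ubar p.1 p.2‖ ^ 2 * ρbar p.1 p.2
        - ∫ θ₁, ‖u p.1 p.2 θ₁‖ ^ 2 * (ρ p.1 p.2 θ₁ * π θ₁)) ∂μ.prod volume :=
    fun y hy hy_int => by
      rw [hLFM, hLCFM, intervalIntegral.integral_of_le zero_le_one,
        intervalIntegral.integral_of_le zero_le_one]
      exact fmLoss_sub_cfmLoss_eq hk.aestronglyMeasurable hu_meas.aestronglyMeasurable hk0 hρbar
        hρbar_pos hubar hIubar hIu hy.aestronglyMeasurable hy_int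
  rw [key v hv_meas hIv, key w hw_meas hIw]

/-- **Flow matching and conditional flow matching losses differ by a constant.**
The flow matching loss `L_FM` (regression on the marginal vector field `ū`) and the
conditional flow matching loss `L_CFM` (regression on the conditional vector fields
`u_t(· | θ₁)`) differ by a quantity that does not depend on the regressed vector field;
in particular they have the same minimizers. -/
theorem fm_cfm_losses_differ_by_constant
    (d : ℕ) (hd : 1 ≤ d)
    (ρ : ℝ → Param d → Param d → ℝ)
    (u : ℝ → Param d → Param d → Param d)
    (π : Param d → ℝ)
    (hρ_meas : Measurable fun p : ℝ × Param d × Param d => ρ p.1 p.2.1 p.2.2)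
    (hρ_nonneg : ∀ t θ θ₁, 0 ≤ ρ t θ θ₁)
    (hu_meas : Measurable fun p : ℝ × Param d × Param d => u p.1 p.2.1 p.2.2)
    (hπ_meas : Measurable π) (hπ_nonneg : ∀ θ₁, 0 ≤ π θ₁)
    -- the marginal probability path
    (ρbar : ℝ → Param d → ℝ)
    (hρbar : ∀ t θ, ρbar t θ = ∫ θ₁, ρ t θ θ₁ * π θ₁)
    -- the marginal vector field, defined where `ρbar t θ > 0`
    (ubar : ℝ → Param d → Param d)
    (hubar : ∀ t θ, 0 < ρbar t θ →
      ubar t θ = (ρbar t θ)⁻¹ • ∫ θ₁, (ρ t θ θ₁ * π θ₁) • u t θ θ₁)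
    -- `ρbar` is positive almost everywhere on `(0,1] × ℝ^d`
    (hρbar_pos : ∀ᵐ p : ℝ × Param d
        ∂(volume.restrict (Set.Ioc (0 : ℝ) 1 ×ˢ (Set.univ : Set (Param d)))),
      0 < ρbar p.1 p.2)
    -- the flow matching loss
    (LFM : (ℝ → Param d → Param d) → ℝ)
    (hLFM : ∀ v, LFM v = ∫ t in (0 : ℝ)..1, ∫ θ, ‖v t θ - ubar t θ‖ ^ 2 * ρbar t θ)
    -- the conditional flow matching loss
    (LCFM : (ℝ → Param d → Param d) → ℝ)
    (hLCFM : ∀ v, LCFM v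
      = ∫ t in (0 : ℝ)..1, ∫ θ, ∫ θ₁, ‖v t θ - u t θ θ₁‖ ^ 2 * (ρ t θ θ₁ * π θ₁))
    -- the two regressed vector fields, measurable
    (v w : ℝ → Param d → Param d)
    (hv_meas : Measurable fun p : ℝ × Param d => v p.1 p.2)
    (hw_meas : Measurable fun p : ℝ × Param d => w p.1 p.2)
    -- finiteness of the four relevant integrals
    (hIv : Integrable (fun p : ℝ × Param d => ‖v p.1 p.2‖ ^ 2 * ρbar p.1 p.2)
      (volume.restrict (Set.Ioc (0 : ℝ) 1 ×ˢ (Set.univ : Set (Param d)))))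
    (hIw : Integrable (fun p : ℝ × Param d => ‖w p.1 p.2‖ ^ 2 * ρbar p.1 p.2)
      (volume.restrict (Set.Ioc (0 : ℝ) 1 ×ˢ (Set.univ : Set (Param d)))))
    (hIubar : Integrable (fun p : ℝ × Param d => ‖ubar p.1 p.2‖ ^ 2 * ρbar p.1 p.2)
      (volume.restrict (Set.Ioc (0 : ℝ) 1 ×ˢ (Set.univ : Set (Param d)))))
    (hIu : Integrable
      (fun p : ℝ × Param d × Param d =>
        ‖u p.1 p.2.1 p.2.2‖ ^ 2 * (ρ p.1 p.2.1 p.2.2 * π p.2.2))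
      (volume.restrict (Set.Ioc (0 : ℝ) 1 ×ˢ (Set.univ : Set (Param d × Param d))))) :
    LFM v - LCFM v = LFM w - LCFM w :=
  fm_cfm_losses_differ_by_constant_general d ρ u π hρ_meas hρ_nonneg hu_meas hπ_meas hπ_nonneg ρbar
    hρbar ubar hubar hρbar_pos LFM hLFM LCFM hLCFM v w hv_meas hw_meas hIv hIw hIubar hIu
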